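/- Let Γ act on a metric space (X,d) so that every generator s ∈ S of Γ acts as a bi-Lipschitz map with constant L ≥ 1. Define D_Γ(x,x') = inf over γ ∈ Γ of (|γ| + d(γx, x')). Then for all x, x' ∈ X: d_Γ(x,x') ≤ D_Γ(x,x') ≤ L^{d_Γ(x,x')} · d_Γ(x,x'), where d_Γ is the warped metric. In particular D_Γ = d_Γ when the action is isometric. -/

import Mathlib

open scoped BigOperators

noncomputable def wordLength {G : Type*} [Group G] (S : Set G) (g : G) : ℕ :=
  sInf {n : ℕ | ∃ f : Fin n → G, (∀ i, f i ∈ S ∨ (f i)⁻¹ ∈ S) ∧ (List.ofFn f).prod = g}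

def chainSums {G : Type*} [Group G] {X : Type*} (S : Set G) (act : G → X → X)
    (d : X → X → ℝ) (x x' : X) : Set ℝ :=
  {c | ∃ (N : ℕ) (xs : Fin (N + 1) → X) (γs : Fin N → G),
    xs 0 = x ∧ xs (Fin.last N) = x' ∧
    c = ∑ i : Fin N, ((wordLength S (γs i) : ℝ) + d (act (γs i) (xs i.castSucc)) (xs i.succ))}

noncomputable def warpDist {G : Type*} [Group G] {X : Type*} (S : Set G) (act : G → X → X)
    (d : X → X → ℝ) (x x' : X) : ℝ :=
  sInf (chainSums S act d x x')

/-- `D_Γ(x,x') = inf_γ (|γ| + d(γx,x'))`. -/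
noncomputable def DGamma {G : Type*} [Group G] {X : Type*} (S : Set G) (act : G → X → X)
    (d : X → X → ℝ) (x x' : X) : ℝ :=
  sInf {c : ℝ | ∃ γ : G, c = (wordLength S γ : ℝ) + d (act γ x) x'}

/-!
Composing the group elements of a chain `x₀ →γ₀ x₁ → ⋯ → x_N` gives one element `g` with
`|g| ≤ T := ∑ |γᵢ|`, and since `g` stretches distances by at most `L ^ |g|`, the errors
`dist (γᵢ xᵢ) xᵢ₊₁` pile up to at most `L ^ T` times their sum. Hence a chain of cost `c` yields
`D_Γ ≤ L ^ c * c`, and `c ↦ L ^ c * c` is continuous, so the bound passes to the infimum `d_Γ`.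
The other inequality holds because one-step chains are chains.
-/

section WordLength

variable {G : Type*} [Group G] {S : Set G}

theorem exists_list_prod_eq_of_mem_closure {g : G} (hg : g ∈ Subgroup.closure S) :
    ∃ l : List G, (∀ a ∈ l, a ∈ S ∨ a⁻¹ ∈ S) ∧ l.prod = g := by
  rw [← Subgroup.mem_toSubmonoid, Subgroup.closure_toSubmonoid] at hg
  simpa only [Set.mem_union, Set.mem_inv] using Submonoid.exists_list_of_mem_closure hg

theorem wordLength_le_length (l : List G) (hl : ∀ a ∈ l, a ∈ S ∨ a⁻¹ ∈ S) :
    wordLength S l.prod ≤ l.length :=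
  Nat.sInf_le ⟨l.get, fun i => hl _ (l.get_mem i), by rw [List.ofFn_get]⟩

theorem wordLength_one : wordLength S (1 : G) = 0 :=
  Nat.le_zero.1 (wordLength_le_length [] (by simp))

theorem exists_list_length_eq_wordLength (hSgen : Subgroup.closure S = ⊤) (g : G) :
    ∃ l : List G, (∀ a ∈ l, a ∈ S ∨ a⁻¹ ∈ S) ∧ l.prod = g ∧ l.length = wordLength S g := by
  obtain ⟨l, hl, rfl⟩ := exists_list_prod_eq_of_mem_closure (hSgen ▸ Subgroup.mem_top g)
  obtain ⟨f, hf, hprod⟩ := Nat.sInf_mem (s := {n | ∃ f : Fin n → G,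
      (∀ i, f i ∈ S ∨ (f i)⁻¹ ∈ S) ∧ (List.ofFn f).prod = l.prod})
    ⟨l.length, l.get, fun i => hl _ (l.get_mem i), by rw [List.ofFn_get]⟩
  refine ⟨List.ofFn f, ?_, hprod, List.length_ofFn⟩
  intro a ha
  obtain ⟨i, rfl⟩ := List.mem_ofFn.1 ha
  exact hf i

theorem wordLength_mul_le (hSgen : Subgroup.closure S = ⊤) (a b : G) :
    wordLength S (a * b) ≤ wordLength S a + wordLength S b := by
  obtain ⟨la, hla, rfl, ha⟩ := exists_list_length_eq_wordLength hSgen a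
  obtain ⟨lb, hlb, rfl, hb⟩ := exists_list_length_eq_wordLength hSgen b
  rw [← ha, ← hb, ← List.length_append, ← List.prod_append]
  exact wordLength_le_length _ fun c hc => (List.mem_append.1 hc).elim (hla c) (hlb c)

end WordLength

theorem le_apply_csInf_of_forall_le {s : Set ℝ} {f : ℝ → ℝ} {a : ℝ} (hf : Continuous f)
    (hne : s.Nonempty) (hbdd : BddBelow s) (h : ∀ c ∈ s, a ≤ f c) : a ≤ f (sInf s) :=
  closure_minimal h (isClosed_le continuous_const hf) (csInf_mem_closure hne hbdd)

section WarpDist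

variable {G : Type*} [Group G] {X : Type*} [MetricSpace X] {S : Set G} {act : G → X → X}

theorem chainSums_bddBelow (x x' : X) : BddBelow (chainSums S act dist x x') := by
  refine ⟨0, ?_⟩
  rintro _ ⟨N, xs, γs, -, -, rfl⟩
  positivity

theorem add_dist_mem_chainSums (γ : G) (x x' : X) :
    (wordLength S γ : ℝ) + dist (act γ x) x' ∈ chainSums S act dist x x' :=
  ⟨1, ![x, x'], ![γ], rfl, rfl, by simp⟩

theorem warpDist_le_DGamma (x x' : X) : warpDist S act dist x x' ≤ DGamma S act dist x x' :=
  csInf_le_csInf (chainSums_bddBelow x x') ⟨_, 1, rfl⟩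
    (by rintro _ ⟨γ, rfl⟩; exact add_dist_mem_chainSums γ x x')

end WarpDist

section Action

variable {G : Type*} [Group G] {X : Type*} [MetricSpace X] {S : Set G} {act : G → X → X}
  {L : ℝ} (hact1 : ∀ x, act 1 x = x) (hactmul : ∀ g h x, act (g * h) x = act g (act h x))
  (hbilip : ∀ s ∈ S, ∀ x y : X,
    dist x y ≤ L * dist (act s x) (act s y) ∧ dist (act s x) (act s y) ≤ L * dist x y)
include hact1 hactmul hbilip

theorem dist_act_le_of_mem_or_inv_mem {s : G} (hs : s ∈ S ∨ s⁻¹ ∈ S) (u v : X) :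
    dist (act s u) (act s v) ≤ L * dist u v := by
  rcases hs with hs | hs
  · exact (hbilip s hs u v).2
  · have hcancel : ∀ w, act s⁻¹ (act s w) = w := fun w => by
      rw [← hactmul, inv_mul_cancel, hact1]
    simpa only [hcancel] using (hbilip s⁻¹ hs (act s u) (act s v)).1

theorem dist_act_list_prod_le (hL₀ : 0 ≤ L) (l : List G) (hl : ∀ a ∈ l, a ∈ S ∨ a⁻¹ ∈ S)
    (u v : X) :
    dist (act l.prod u) (act l.prod v) ≤ L ^ l.length * dist u v := by
  induction l with
  | nil => simp [hact1]
  | cons s t ih =>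
    rw [List.prod_cons, hactmul, hactmul, List.length_cons, pow_succ', mul_assoc]
    calc dist (act s (act t.prod u)) (act s (act t.prod v))
        ≤ L * dist (act t.prod u) (act t.prod v) :=
          dist_act_le_of_mem_or_inv_mem hact1 hactmul hbilip (hl s List.mem_cons_self) _ _
      _ ≤ L * (L ^ t.length * dist u v) :=
          mul_le_mul_of_nonneg_left (ih fun a ha => hl a (List.mem_cons_of_mem s ha)) hL₀

theorem dist_act_le_pow_wordLength (hSgen : Subgroup.closure S = ⊤) (hL₀ : 0 ≤ L) (g : G)
    (u v : X) :
    dist (act g u) (act g v) ≤ L ^ wordLength S g * dist u v := by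
  obtain ⟨l, hl, rfl, hlen⟩ := exists_list_length_eq_wordLength hSgen g
  rw [← hlen]
  exact dist_act_list_prod_le hact1 hactmul hbilip hL₀ l hl u v

variable (hSgen : Subgroup.closure S = ⊤) (hL : 1 ≤ L)
include hSgen hL

theorem dist_act_mul_le_of_dist_act_le {g : G} {x y : X} {n : ℕ} {e : ℝ}
    (h : dist (act g x) y ≤ L ^ n * e) (γ : G) (z : X) :
    dist (act (γ * g) x) z ≤ L ^ (n + wordLength S γ) * (e + dist (act γ y) z) := by
  have hLγ : 0 ≤ L ^ wordLength S γ := pow_nonneg (zero_le_one.trans hL) _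
  calc dist (act (γ * g) x) z
      ≤ dist (act γ (act g x)) (act γ y) + dist (act γ y) z := hactmul γ g x ▸ dist_triangle ..
    _ ≤ L ^ wordLength S γ * (L ^ n * e) + L ^ (n + wordLength S γ) * dist (act γ y) z := by
        gcongr
        · exact (dist_act_le_pow_wordLength hact1 hactmul hbilip hSgen (zero_le_one.trans hL)
            γ _ _).trans (mul_le_mul_of_nonneg_left h hLγ)
        · exact le_mul_of_one_le_left dist_nonneg (one_le_pow₀ hL)
    _ = L ^ (n + wordLength S γ) * (e + dist (act γ y) z) := by ring

theorem exists_wordLength_le_and_dist_act_le (N : ℕ) (xs : Fin (N + 1) → X) (γs : Fin N → G) :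
    ∃ g : G, wordLength S g ≤ ∑ i, wordLength S (γs i) ∧
      dist (act g (xs 0)) (xs (Fin.last N)) ≤
        L ^ (∑ i, wordLength S (γs i)) * ∑ i, dist (act (γs i) (xs i.castSucc)) (xs i.succ) := by
  induction N with
  | zero => exact ⟨1, by simp [wordLength_one], by simp [hact1, Fin.last_zero]⟩
  | succ N ih =>
    obtain ⟨g, hg, hdist⟩ := ih (fun i => xs i.castSucc) (fun i => γs i.castSucc)
    refine ⟨γs (Fin.last N) * g, ?_, ?_⟩
    · rw [Fin.sum_univ_castSucc]
      exact (wordLength_mul_le hSgen _ _).trans (by omega)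
    · rw [Fin.sum_univ_castSucc, Fin.sum_univ_castSucc, ← Fin.succ_last]
      exact dist_act_mul_le_of_dist_act_le hact1 hactmul hbilip hSgen hL hdist _ _

theorem DGamma_le_rpow_mul_of_mem_chainSums {x x' : X} {c : ℝ}
    (hc : c ∈ chainSums S act dist x x') : DGamma S act dist x x' ≤ L ^ c * c := by
  obtain ⟨N, xs, γs, rfl, rfl, rfl⟩ := hc
  obtain ⟨g, hg, hdist⟩ :=
    exists_wordLength_le_and_dist_act_le hact1 hactmul hbilip hSgen hL N xs γs
  set T := ∑ i, wordLength S (γs i)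
  set E := ∑ i, dist (act (γs i) (xs i.castSucc)) (xs i.succ)
  have hsum : ∑ i, ((wordLength S (γs i) : ℝ) + dist (act (γs i) (xs i.castSucc)) (xs i.succ))
      = T + E := by
    rw [Finset.sum_add_distrib, Nat.cast_sum]
  have hE : 0 ≤ E := Finset.sum_nonneg fun _ _ => dist_nonneg
  have hLc : 1 ≤ L ^ ((T : ℝ) + E) := Real.one_le_rpow hL (by positivity)
  have hLT : L ^ T ≤ L ^ ((T : ℝ) + E) := by
    rw [← Real.rpow_natCast]; exact Real.rpow_le_rpow_of_exponent_le hL (by linarith)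
  rw [hsum]
  calc DGamma S act dist (xs 0) (xs (Fin.last N))
      ≤ wordLength S g + dist (act g (xs 0)) (xs (Fin.last N)) :=
        csInf_le ⟨0, by rintro _ ⟨γ, rfl⟩; positivity⟩ ⟨g, rfl⟩
    _ ≤ T + L ^ T * E := add_le_add (by exact_mod_cast hg) hdist
    _ ≤ L ^ ((T : ℝ) + E) * T + L ^ ((T : ℝ) + E) * E :=
        add_le_add (le_mul_of_one_le_left T.cast_nonneg hLc) (mul_le_mul_of_nonneg_right hLT hE)
    _ = L ^ ((T : ℝ) + E) * (T + E) := by ring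

theorem DGamma_le_rpow_warpDist_mul_warpDist (x x' : X) :
    DGamma S act dist x x' ≤ L ^ warpDist S act dist x x' * warpDist S act dist x x' :=
  le_apply_csInf_of_forall_le (f := fun c => L ^ c * c)
    ((continuous_const.rpow continuous_id fun _ => .inl (by linarith)).mul continuous_id)
    ⟨_, add_dist_mem_chainSums 1 x x'⟩ (chainSums_bddBelow x x')
    fun _ hc => DGamma_le_rpow_mul_of_mem_chainSums hact1 hactmul hbilip hSgen hL hc

end Action

theorem warped_metric_vs_one_step_general {X : Type*} [MetricSpace X] {G : Type*} [Group G]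
    (S : Set G) (hSgen : Subgroup.closure S = ⊤)
    (act : G → X → X)
    (hact1 : ∀ x, act 1 x = x) (hactmul : ∀ g h x, act (g * h) x = act g (act h x))
    (L : ℝ) (hL : 1 ≤ L)
    (hbilip : ∀ s ∈ S, ∀ x y : X,
      dist x y ≤ L * dist (act s x) (act s y) ∧ dist (act s x) (act s y) ≤ L * dist x y) :
    ∀ x x' : X,
      warpDist S act dist x x' ≤ DGamma S act dist x x' ∧
      DGamma S act dist x x' ≤ L ^ (warpDist S act dist x x') * warpDist S act dist x x' :=
  fun x x' => ⟨warpDist_le_DGamma x x',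
    DGamma_le_rpow_warpDist_mul_warpDist hact1 hactmul hbilip hSgen hL x x'⟩

/-- `d_Γ(x,x') ≤ D_Γ(x,x') ≤ L^{d_Γ(x,x')} · d_Γ(x,x')`. -/
theorem warped_metric_vs_one_step {X : Type*} [MetricSpace X] {G : Type*} [Group G]
    (S : Set G) (hSfin : S.Finite) (hSgen : Subgroup.closure S = ⊤)
    (act : G → X → X)
    (hact1 : ∀ x, act 1 x = x) (hactmul : ∀ g h x, act (g * h) x = act g (act h x))
    (L : ℝ) (hL : 1 ≤ L)
    (hbilip : ∀ s ∈ S, ∀ x y : X,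
      dist x y ≤ L * dist (act s x) (act s y) ∧ dist (act s x) (act s y) ≤ L * dist x y) :
    ∀ x x' : X,
      warpDist S act dist x x' ≤ DGamma S act dist x x' ∧
      DGamma S act dist x x' ≤ L ^ (warpDist S act dist x x') * warpDist S act dist x x' :=
  warped_metric_vs_one_step_general S hSgen act hact1 hactmul L hL hbilip
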